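/- arXiv:2508.17232 — 2 statements merged into one kernel-verified Lean document; each statement's English description precedes it below -/
import Mathlib

section
/- For the Möbius addition x ⊕_c y on the Poincaré ball, the deviation from Euclidean addition satisfies ‖x ⊕_c y − (x + y)‖ ≤ (2c‖x‖‖y‖ + 3c‖x‖²‖y‖ + 2c‖x‖‖y‖² + c²‖x‖²‖y‖³ + c²‖x‖³‖y‖²) / |1 + 2c⟨x,y⟩ + c²‖x‖²‖y‖²|, provided the denominator is nonzero. -/
open RealInnerProductSpace

/-- Möbius addition on the Poincaré ball of curvature `−c`. -/
noncomputable def mobiusAdd {d : ℕ} (c : ℝ) (x y : EuclideanSpace ℝ (Fin d)) :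
    EuclideanSpace ℝ (Fin d) :=
  (1 + 2 * c * ⟪x, y⟫ + c ^ 2 * ‖x‖ ^ 2 * ‖y‖ ^ 2)⁻¹ •
    ((1 + 2 * c * ⟪x, y⟫ + c * ‖y‖ ^ 2) • x + (1 - c * ‖x‖ ^ 2) • y)

set_option maxHeartbeats 1000000 in
/-- the deviation of Möbius addition from Euclidean addition satisfies
`‖x ⊕_c y − (x + y)‖ ≤ (2c‖x‖‖y‖ + 3c‖x‖²‖y‖ + 2c‖x‖‖y‖² + c²‖x‖²‖y‖³ + c²‖x‖³‖y‖²)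
  / |1 + 2c⟪x,y⟫ + c²‖x‖²‖y‖²|`, provided the denominator is nonzero. -/
theorem mobiusAdd_sub_add_norm_le {d : ℕ} (c : ℝ) (hc : 0 < c)
    (x y : EuclideanSpace ℝ (Fin d))
    (hx : c * ‖x‖ ^ 2 < 1) (hy : c * ‖y‖ ^ 2 < 1)
    (hden : 1 + 2 * c * ⟪x, y⟫ + c ^ 2 * ‖x‖ ^ 2 * ‖y‖ ^ 2 ≠ 0) :
    ‖mobiusAdd c x y - (x + y)‖ ≤
      (2 * c * ‖x‖ * ‖y‖ + 3 * c * ‖x‖ ^ 2 * ‖y‖ + 2 * c * ‖x‖ * ‖y‖ ^ 2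
        + c ^ 2 * ‖x‖ ^ 2 * ‖y‖ ^ 3 + c ^ 2 * ‖x‖ ^ 3 * ‖y‖ ^ 2) /
      |1 + 2 * c * ⟪x, y⟫ + c ^ 2 * ‖x‖ ^ 2 * ‖y‖ ^ 2| := by
  set D : ℝ := 1 + 2 * c * ⟪x, y⟫ + c ^ 2 * ‖x‖ ^ 2 * ‖y‖ ^ 2 with hD
  set u : EuclideanSpace ℝ (Fin d) := (c * ‖y‖ ^ 2) • x - (2 * c * ⟪x, y⟫) • y with hu
  set v : EuclideanSpace ℝ (Fin d) := (c ^ 2 * ‖x‖ ^ 2 * ‖y‖ ^ 2) • x with hv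
  set w : EuclideanSpace ℝ (Fin d) :=
    (c * ‖x‖ ^ 2 + c ^ 2 * ‖x‖ ^ 2 * ‖y‖ ^ 2) • y with hw
  have key : ((1 + 2 * c * ⟪x, y⟫ + c * ‖y‖ ^ 2) • x + (1 - c * ‖x‖ ^ 2) • y)
      - D • (x + y) = u - v - w := by
    rw [hD, hu, hv, hw]
    module
  have hvec : mobiusAdd c x y - (x + y) = D⁻¹ • (u - v - w) := by
    rw [← key, smul_sub, inv_smul_smul₀ hden]
    rfl
  have hun : ‖u‖ = c * ‖x‖ * ‖y‖ ^ 2 := by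
    have h2 : ‖u‖ ^ 2 = (c * ‖x‖ * ‖y‖ ^ 2) ^ 2 := by
      rw [← real_inner_self_eq_norm_sq, hu]
      simp only [inner_sub_left, inner_sub_right, real_inner_smul_left,
        real_inner_smul_right, real_inner_comm y x]
      simp only [real_inner_self_eq_norm_sq]
      ring
    have h3 : (0:ℝ) ≤ c * ‖x‖ * ‖y‖ ^ 2 := by positivity
    nlinarith [norm_nonneg u]
  have hvn : ‖v‖ = c ^ 2 * ‖x‖ ^ 2 * ‖y‖ ^ 2 * ‖x‖ := by
    rw [hv, norm_smul, Real.norm_eq_abs, abs_of_nonneg (by positivity)]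
  have hwn : ‖w‖ = (c * ‖x‖ ^ 2 + c ^ 2 * ‖x‖ ^ 2 * ‖y‖ ^ 2) * ‖y‖ := by
    rw [hw, norm_smul, Real.norm_eq_abs, abs_of_nonneg (by positivity)]
  have htri : ‖u - v - w‖ ≤ ‖u‖ + ‖v‖ + ‖w‖ := by
    calc ‖u - v - w‖ ≤ ‖u - v‖ + ‖w‖ := norm_sub_le _ _
      _ ≤ ‖u‖ + ‖v‖ + ‖w‖ := by gcongr; exact norm_sub_le _ _
  rw [hvec, norm_smul, Real.norm_eq_abs, abs_inv]
  rw [inv_mul_eq_div, div_le_div_iff₀ (abs_pos.mpr hden) (abs_pos.mpr hden)]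
  have hnum : ‖u‖ + ‖v‖ + ‖w‖ ≤
      2 * c * ‖x‖ * ‖y‖ + 3 * c * ‖x‖ ^ 2 * ‖y‖ + 2 * c * ‖x‖ * ‖y‖ ^ 2
        + c ^ 2 * ‖x‖ ^ 2 * ‖y‖ ^ 3 + c ^ 2 * ‖x‖ ^ 3 * ‖y‖ ^ 2 := by
    rw [hun, hvn, hwn]
    have h1 : (0:ℝ) ≤ c * ‖x‖ * ‖y‖ := by positivity
    have h2 : (0:ℝ) ≤ c * ‖x‖ ^ 2 * ‖y‖ := by positivity
    have h3 : (0:ℝ) ≤ c * ‖x‖ * ‖y‖ ^ 2 := by positivity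
    nlinarith [h1, h2, h3]
  have := htri.trans hnum
  have habs : (0:ℝ) ≤ |D| := abs_nonneg _
  nlinarith [norm_nonneg (u - v - w), mul_le_mul_of_nonneg_right this habs]
end

section
/- Let F: R → R be L-smooth (its gradient is L-Lipschitz). Suppose curvature iterates satisfy c^{(t+1)} = c^{(t)} − η ĝ^{(t)} where ‖ĝ^{(t)} − ∇F(c^{(t)})‖² ≤ E for all t and η is a fixed step size with 1/(8L) ≤ η ≤ 1/(4L). Then (1/T) Σ_{t=1}^{T} ‖∇F(c^{(t)})‖² ≤ (64/3)·L·(F(c^{(1)}) − F(c^{(T+1)}))/T + 3E. -/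
/-!
With an `L`-Lipschitz derivative, `F (x - η g) ≤ F x - η F'(x) g + L η² g²`; for `L η ≤ 1/4`
this is a descent step `F (x - η g) ≤ F x - (η/2) F'(x)² + (η/2) (g - F'(x))²`. Summing
telescopes to `Σ F'(c t)² ≤ (2/η) Δ + T E` with `Δ = F (c 1) - F (c (T+1))` and
`8 L ≤ 2/η ≤ 16 L`. When `Δ < 0` the same inequality bounds how negative `Δ` can be, which is
what the extra `2 E` in the constant `3 E` absorbs.
-/

open Finset

theorem le_add_deriv_mul_add_sq_of_abs_deriv_sub_le {F : ℝ → ℝ} {L : ℝ} (hL : 0 ≤ L)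
    (hdiff : Differentiable ℝ F)
    (hlip : ∀ x y : ℝ, |deriv F x - deriv F y| ≤ L * |x - y|) (x y : ℝ) :
    F y ≤ F x + deriv F x * (y - x) + L * (y - x) ^ 2 := by
  set G : ℝ → ℝ := fun z => F z - deriv F x * z
  have hG : ∀ z, HasDerivAt G (deriv F z - deriv F x) z := fun z =>
    ((hdiff z).hasDerivAt.sub ((hasDerivAt_id z).const_mul (deriv F x))).congr_deriv (by simp)
  have hG_bound : ∀ z ∈ Set.uIcc x y, ‖deriv G z‖ ≤ L * |y - x| := fun z hz => by
    rw [(hG z).deriv, Real.norm_eq_abs]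
    exact (hlip z x).trans
      (mul_le_mul_of_nonneg_left (Set.abs_sub_left_of_mem_uIcc hz) hL)
  have hG_diff : |G y - G x| ≤ L * |y - x| * |y - x| :=
    Convex.norm_image_sub_le_of_norm_deriv_le (fun z _ => (hG z).differentiableAt)
      hG_bound (convex_uIcc x y) Set.left_mem_uIcc Set.right_mem_uIcc
  rw [mul_assoc, ← abs_mul, ← sq, abs_sq] at hG_diff
  have hG_sub : G y - G x = F y - F x - deriv F x * (y - x) := by simp only [G]; ring
  linarith [(abs_le.mp hG_diff).2]

theorem le_sub_sq_deriv_add_sq_error {F : ℝ → ℝ} {L : ℝ} (hL : 0 ≤ L)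
    (hdiff : Differentiable ℝ F)
    (hlip : ∀ x y : ℝ, |deriv F x - deriv F y| ≤ L * |x - y|)
    {η : ℝ} (hη : 0 ≤ η) (hLη : L * η ≤ 1 / 4) (x g : ℝ) :
    F (x - η * g) ≤ F x - η / 2 * deriv F x ^ 2 + η / 2 * (g - deriv F x) ^ 2 := by
  have hdesc := le_add_deriv_mul_add_sq_of_abs_deriv_sub_le hL hdiff hlip x (x - η * g)
  have hquad : L * (η * g) ^ 2 ≤ η / 4 * g ^ 2 := by
    have := mul_le_mul_of_nonneg_right hLη (mul_nonneg hη (sq_nonneg g))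
    linarith
  -- the slack `η / 4 * g ^ 2` is dropped
  have hslack : -(η * deriv F x * g) + η / 4 * g ^ 2
      = -(η / 2 * deriv F x ^ 2) + η / 2 * (g - deriv F x) ^ 2 - η / 4 * g ^ 2 := by ring
  nlinarith [mul_nonneg hη (sq_nonneg g)]

theorem sq_deriv_le_two_div_mul_sub_add_sq_error {F : ℝ → ℝ} {L : ℝ} (hL : 0 ≤ L)
    (hdiff : Differentiable ℝ F)
    (hlip : ∀ x y : ℝ, |deriv F x - deriv F y| ≤ L * |x - y|)
    {η : ℝ} (hη : 0 < η) (hLη : L * η ≤ 1 / 4) (x g : ℝ) :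
    deriv F x ^ 2 ≤ 2 / η * (F x - F (x - η * g)) + (g - deriv F x) ^ 2 := by
  have hdesc := le_sub_sq_deriv_add_sq_error hL hdiff hlip hη.le hLη x g
  calc deriv F x ^ 2 = 2 / η * (η / 2 * (deriv F x ^ 2 - (g - deriv F x) ^ 2))
        + (g - deriv F x) ^ 2 := by field_simp; ring
    _ ≤ 2 / η * (F x - F (x - η * g)) + (g - deriv F x) ^ 2 := by gcongr; linarith

theorem sum_Icc_le_of_le_mul_sub_add {a f : ℕ → ℝ} {b E : ℝ}
    (h : ∀ t, a t ≤ b * (f t - f (t + 1)) + E) {T : ℕ} (hT : 0 < T) :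
    ∑ t ∈ Icc 1 T, a t ≤ b * (f 1 - f (T + 1)) + T * E := by
  have htel : ∑ t ∈ Icc 1 T, (f t - f (t + 1)) = f 1 - f (T + 1) := by
    rw [← neg_sub, ← Finset.sum_Icc_sub hT f, ← Finset.sum_neg_distrib]
    simp only [neg_sub]
  calc ∑ t ∈ Icc 1 T, a t ≤ ∑ t ∈ Icc 1 T, (b * (f t - f (t + 1)) + E) :=
        sum_le_sum fun t _ => h t
    _ = b * (f 1 - f (T + 1)) + T * E := by
      rw [sum_add_distrib, ← mul_sum, htel, sum_const, Nat.card_Icc, nsmul_eq_mul]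
      simp

theorem le_mul_add_three_mul_of_le_mul_add {S a k Δ B : ℝ} (hS : 0 ≤ S) (hSle : S ≤ a * Δ + B)
    (hB : 0 ≤ B) (ha : 0 < a) (hak : a ≤ k) (hka : k ≤ 3 * a) : S ≤ k * Δ + 3 * B := by
  rcases le_or_gt 0 Δ with hΔ | hΔ
  · nlinarith
  · nlinarith [mul_le_mul_of_nonneg_left (by linarith : -B ≤ a * Δ) (by linarith : 0 ≤ k - a)]

/-- Convergence of curvature learning with approximate gradients. If
`F : ℝ → ℝ` is differentiable with `L`-Lipschitz derivative, the iterates satisfy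
`c^{(t+1)} = c^{(t)} − η ĝ^{(t)}` with `(ĝ^{(t)} − F'(c^{(t)}))² ≤ E` for all `t` and
`1/(8L) ≤ η ≤ 1/(4L)`, then
`(1/T) Σ_{t=1}^{T} (F'(c^{(t)}))² ≤ (64/3)·L·(F(c^{(1)}) − F(c^{(T+1)}))/T + 3E`. -/
theorem curvature_convergence (F : ℝ → ℝ) (L : ℝ) (hL : 0 < L)
    (hdiff : Differentiable ℝ F)
    (hlip : ∀ x y : ℝ, |deriv F x - deriv F y| ≤ L * |x - y|)
    (c g : ℕ → ℝ) (η : ℝ)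
    (hupd : ∀ t : ℕ, c (t + 1) = c t - η * g t)
    (E : ℝ) (herr : ∀ t : ℕ, (g t - deriv F (c t)) ^ 2 ≤ E)
    (hη₁ : 1 / (8 * L) ≤ η) (hη₂ : η ≤ 1 / (4 * L))
    (T : ℕ) (hT : 0 < T) :
    (1 / (T : ℝ)) * ∑ t ∈ Finset.Icc 1 T, (deriv F (c t)) ^ 2 ≤
      (64 / 3) * L * (F (c 1) - F (c (T + 1))) / T + 3 * E := by
  have hη : 0 < η := lt_of_lt_of_le (by positivity) hη₁
  have hE : 0 ≤ E := (sq_nonneg _).trans (herr 0)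
  have hT' : (0 : ℝ) < T := by exact_mod_cast hT
  have hLη_le : L * η ≤ 1 / 4 := by rw [le_div_iff₀ (by positivity)] at hη₂; linarith
  have hLη_ge : 1 / 8 ≤ L * η := by rw [div_le_iff₀ (by positivity)] at hη₁; linarith
  have hstep : ∀ t, deriv F (c t) ^ 2 ≤ 2 / η * (F (c t) - F (c (t + 1))) + E := fun t => by
    rw [hupd t]
    exact (sq_deriv_le_two_div_mul_sub_add_sq_error hL.le hdiff hlip hη hLη_le (c t) (g t)).trans
      (by gcongr; exact herr t)
  have hsum := sum_Icc_le_of_le_mul_sub_add hstep hT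
  have hak : 2 / η ≤ 64 / 3 * L := by rw [div_le_iff₀ hη]; nlinarith
  have hka : 64 / 3 * L ≤ 3 * (2 / η) := by rw [mul_div_assoc', le_div_iff₀ hη]; nlinarith
  have hmain := le_mul_add_three_mul_of_le_mul_add (sum_nonneg fun t _ => sq_nonneg _) hsum
    (mul_nonneg hT'.le hE) (by positivity) hak hka
  calc (1 / (T : ℝ)) * ∑ t ∈ Icc 1 T, deriv F (c t) ^ 2
      ≤ (1 / T) * (64 / 3 * L * (F (c 1) - F (c (T + 1))) + 3 * (T * E)) := by gcongr
    _ = 64 / 3 * L * (F (c 1) - F (c (T + 1))) / T + 3 * E := by field_simp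
end
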